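/- arXiv:2603.22000 — 5 statements merged into one kernel-verified Lean document; each statement's English description precedes it below -/
import Mathlib

section
/- For an empirical distribution F with m equally weighted atoms y_1,...,y_m and a real outcome y, the integral ∫(F(t) - 1[t ≥ y])² dt equals (1/m)·Σᵢ|yᵢ - y| - (1/(2m²))·Σᵢ Σⱼ |yᵢ - yⱼ|. -/
open MeasureTheory Finset

/-!
Write `H_a = 1[· ≥ a]`. Then `F - H_{y₀} = (1/m) Σᵢ (H_{yᵢ} - H_{y₀})`, so the integrand is
`(1/m²) Σᵢ Σⱼ (H_{yᵢ} - H_{y₀})(H_{yⱼ} - H_{y₀})`. Since `(H_a - H_b)²` is the indicator of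
`[min a b, max a b)`, its integral is `|a - b|`, and polarization gives
`∫ (H_a - H_c)(H_b - H_c) = (|a - c| + |b - c| - |a - b|) / 2`; summing over `i, j` yields the
formula.
-/

noncomputable def heaviside (a t : ℝ) : ℝ := if a ≤ t then 1 else 0

lemma heaviside_sub_heaviside_sq (a b t : ℝ) :
    (heaviside a t - heaviside b t) ^ 2 = (Set.Ico (min a b) (max a b)).indicator 1 t := by
  unfold heaviside
  rcases le_total a b with hab | hab <;>
    by_cases ha : a ≤ t <;> by_cases hb : b ≤ t <;>
    simp [Set.indicator_apply, hab, ha, hb] <;> grind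

lemma integrable_heaviside_sub_heaviside_sq (a b : ℝ) :
    Integrable (fun t => (heaviside a t - heaviside b t) ^ 2) := by
  simp_rw [heaviside_sub_heaviside_sq]
  exact (integrable_indicator_iff measurableSet_Ico).2 (integrableOn_const measure_Ico_lt_top.ne)

lemma integral_heaviside_sub_heaviside_sq (a b : ℝ) :
    ∫ t, (heaviside a t - heaviside b t) ^ 2 = |a - b| := by
  simp_rw [heaviside_sub_heaviside_sq]
  rw [integral_indicator_one measurableSet_Ico, measureReal_def, Real.volume_Ico,
    ENNReal.toReal_ofReal (sub_nonneg.2 min_le_max), max_sub_min_eq_abs']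

lemma heaviside_sub_mul_heaviside_sub (a b c t : ℝ) :
    (heaviside a t - heaviside c t) * (heaviside b t - heaviside c t)
      = ((heaviside a t - heaviside c t) ^ 2 + (heaviside b t - heaviside c t) ^ 2
          - (heaviside a t - heaviside b t) ^ 2) / 2 := by
  ring

lemma integrable_heaviside_sub_mul_heaviside_sub (a b c : ℝ) :
    Integrable (fun t => (heaviside a t - heaviside c t) * (heaviside b t - heaviside c t)) := by
  simp_rw [heaviside_sub_mul_heaviside_sub]
  exact (((integrable_heaviside_sub_heaviside_sq a c).add
    (integrable_heaviside_sub_heaviside_sq b c)).sub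
    (integrable_heaviside_sub_heaviside_sq a b)).div_const 2

lemma integral_heaviside_sub_mul_heaviside_sub (a b c : ℝ) :
    ∫ t, (heaviside a t - heaviside c t) * (heaviside b t - heaviside c t)
      = (|a - c| + |b - c| - |a - b|) / 2 := by
  simp_rw [heaviside_sub_mul_heaviside_sub]
  rw [integral_div, integral_sub _ (integrable_heaviside_sub_heaviside_sq a b),
    integral_add (integrable_heaviside_sub_heaviside_sq a c)
      (integrable_heaviside_sub_heaviside_sq b c),
    integral_heaviside_sub_heaviside_sq, integral_heaviside_sub_heaviside_sq,
    integral_heaviside_sub_heaviside_sq]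
  exact (integrable_heaviside_sub_heaviside_sq a c).add (integrable_heaviside_sub_heaviside_sq b c)

lemma empirical_cdf_sub_heaviside_sq {ι : Type*} [Fintype ι] [Nonempty ι] (y : ι → ℝ)
    (y₀ t : ℝ) :
    ((#{i | y i ≤ t} : ℝ) / Fintype.card ι - heaviside y₀ t) ^ 2
      = (1 / (Fintype.card ι : ℝ) ^ 2) * ∑ i, ∑ j,
          (heaviside (y i) t - heaviside y₀ t) * (heaviside (y j) t - heaviside y₀ t) := by
  have hcard : (#{i | y i ≤ t} : ℝ) = ∑ i, heaviside (y i) t := by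
    simp only [card_filter, Nat.cast_sum, Nat.cast_ite, Nat.cast_one, Nat.cast_zero, heaviside]
  rw [← sum_mul_sum, ← sq, sum_sub_distrib, sum_const, card_univ, nsmul_eq_mul, hcard]
  field_simp

lemma sum_sum_polarization_abs {ι : Type*} [Fintype ι] (y : ι → ℝ) (y₀ : ℝ) :
    ∑ i, ∑ j, (|y i - y₀| + |y j - y₀| - |y i - y j|) / 2
      = Fintype.card ι * ∑ i, |y i - y₀| - (1 / 2) * ∑ i, ∑ j, |y i - y j| := by
  simp only [← sum_div, sum_sub_distrib, sum_add_distrib, sum_const, card_univ, nsmul_eq_mul,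
    ← mul_sum]
  ring

/-- For the empirical CDF `F` of `m` equally weighted atoms
`y 0, ..., y (m-1)` and a real outcome `y₀`, the integral
`∫ (F t - 1[t ≥ y₀])² dt` equals
`(1/m)·Σᵢ |y i - y₀| - (1/(2m²))·Σᵢ Σⱼ |y i - y j|`. -/
theorem crps_empirical_integral (m : ℕ) (hm : 1 ≤ m) (y : Fin m → ℝ) (y₀ : ℝ) :
    ∫ t : ℝ,
        (((univ.filter (fun i : Fin m => y i ≤ t)).card : ℝ) / m
          - (if y₀ ≤ t then (1 : ℝ) else 0)) ^ 2
      = (1 / m) * ∑ i, |y i - y₀|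
        - (1 / (2 * (m : ℝ) ^ 2)) * ∑ i, ∑ j, |y i - y j| := by
  have : Nonempty (Fin m) := ⟨⟨0, hm⟩⟩
  have hm0 : (m : ℝ) ≠ 0 := by positivity
  have h := empirical_cdf_sub_heaviside_sq y y₀
  simp only [Fintype.card_fin] at h
  change ∫ t, ((#{i | y i ≤ t} : ℝ) / m - heaviside y₀ t) ^ 2 = _
  simp_rw [h, integral_const_mul]
  rw [integral_finsetSum _ fun i _ => integrable_finsetSum _ fun j _ =>
    integrable_heaviside_sub_mul_heaviside_sub (y i) (y j) y₀]
  simp_rw [integral_finsetSum _ fun j _ => integrable_heaviside_sub_mul_heaviside_sub _ (y j) y₀,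
    integral_heaviside_sub_mul_heaviside_sub, sum_sum_polarization_abs, Fintype.card_fin]
  field_simp
end

section
/- Let y_1,...,y_m be real numbers with m ≥ 2, and let W = Σ_{ℓ<r} |y_ℓ - y_r|. Then the total leave-one-out CRPS, Σ_{k=1}^m CRPS(F^{(-k)}, y_k), where F^{(-k)} is the empirical CDF of the values excluding y_k, equals m·W/(m-1)². -/
open Finset

/-- CRPS of the empirical CDF of the values `z i`, `i ∈ s`, evaluated at `y`
(the closed-form formula for empirical distributions). -/
noncomputable def empCRPS {ι : Type*} [DecidableEq ι] (s : Finset ι) (z : ι → ℝ) (y : ℝ) : ℝ :=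
  (1 / s.card) * ∑ i ∈ s, |z i - y|
    - (1 / (2 * (s.card : ℝ) ^ 2)) * ∑ i ∈ s, ∑ j ∈ s, |z i - z j|

/-- for `m ≥ 2` and `W = Σ_{ℓ<r} |y ℓ - y r|`, the total leave-one-out
CRPS `Σ_k CRPS(F^{(-k)}, y k)` equals `m·W/(m-1)²`. -/
theorem total_loo_crps (m : ℕ) (hm : 2 ≤ m) (y : Fin m → ℝ) (W : ℝ)
    (hW : W = ∑ ℓ, ∑ r ∈ univ.filter (fun r => ℓ < r), |y ℓ - y r|) :
    ∑ k, empCRPS (univ.erase k) y (y k) = m * W / ((m : ℝ) - 1) ^ 2 := by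
  set A : Fin m → ℝ := fun k => ∑ i ∈ univ.erase k, |y i - y k| with hA
  set S : ℝ := ∑ i, ∑ j, |y i - y j| with hS
  have h1 : (1 : ℝ) ≤ (m : ℝ) := by exact_mod_cast Nat.one_le_of_lt hm
  have h2 : (2 : ℝ) ≤ (m : ℝ) := by exact_mod_cast hm
  have hm1 : ((m : ℝ) - 1) ≠ 0 := by linarith
  -- sum of A equals 2W
  have hsumA : ∑ k, A k = 2 * W := by
    have h := Finset.sum_sum_Ioi_add_eq_sum_sum_off_diag (fun j i => |y j - y i|)
    have hlhs : ∑ i, ∑ j ∈ Ioi i, (|y j - y i| + |y i - y j|) = 2 * W := by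
      rw [hW, Finset.mul_sum]
      apply Finset.sum_congr rfl
      intro i _
      have : (univ.filter (fun r => i < r)) = Ioi i := by ext r; simp
      rw [this, Finset.mul_sum]
      apply Finset.sum_congr rfl
      intro j _
      rw [abs_sub_comm (y j) (y i)]; ring
    rw [← hlhs, h]
    apply Finset.sum_congr rfl
    intro i _
    apply Finset.sum_congr _ (fun _ _ => rfl)
    ext j; simp [eq_comm]
  -- S = sum of A = 2W
  have hS2 : S = 2 * W := by
    rw [hS, ← hsumA]
    apply Finset.sum_congr rfl
    intro i _
    rw [hA]
    rw [← Finset.sum_erase (univ : Finset (Fin m)) (by simp : |y i - y i| = 0)]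
    apply Finset.sum_congr rfl
    intro j _
    exact abs_sub_comm _ _
  -- per-k formula
  have hterm : ∀ k, empCRPS (univ.erase k) y (y k)
      = (1 / ((m : ℝ) - 1)) * A k - (1 / (2 * ((m : ℝ) - 1) ^ 2)) * (S - 2 * A k) := by
    intro k
    have hcard : (((univ.erase k).card : ℝ)) = (m : ℝ) - 1 := by
      rw [Finset.card_erase_of_mem (mem_univ k), card_univ, Fintype.card_fin]
      push_cast [Nat.cast_sub (Nat.one_le_of_lt hm)]
      ring
    have hdouble : ∑ i ∈ univ.erase k, ∑ j ∈ univ.erase k, |y i - y j| = S - 2 * A k := by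
      have hout : S = (∑ j, |y k - y j|) + ∑ i ∈ univ.erase k, ∑ j, |y i - y j| := by
        rw [hS, ← Finset.add_sum_erase (univ : Finset (Fin m)) _ (mem_univ k)]
      have hrow : (∑ j, |y k - y j|) = A k := by
        rw [hA, ← Finset.sum_erase (univ : Finset (Fin m)) (by simp : |y k - y k| = 0)]
        exact Finset.sum_congr rfl fun j _ => abs_sub_comm _ _
      have hin : ∀ i, (∑ j, |y i - y j|)
          = |y i - y k| + ∑ j ∈ univ.erase k, |y i - y j| := by
        intro i
        rw [← Finset.add_sum_erase (univ : Finset (Fin m)) _ (mem_univ k)]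
      have : ∑ i ∈ univ.erase k, ∑ j, |y i - y j|
          = A k + ∑ i ∈ univ.erase k, ∑ j ∈ univ.erase k, |y i - y j| := by
        rw [hA]
        rw [Finset.sum_congr rfl (fun i _ => hin i), Finset.sum_add_distrib]
      rw [hout, hrow, this] at *
      linarith
    rw [empCRPS, hcard, hdouble]
  rw [Finset.sum_congr rfl (fun k _ => hterm k), Finset.sum_sub_distrib,
    ← Finset.mul_sum, ← Finset.mul_sum, Finset.sum_sub_distrib, Finset.sum_const,
    card_univ, Fintype.card_fin, ← Finset.mul_sum, hsumA, hS2]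
  field_simp
  ring
end

section
/- If a cost function c on intervals satisfies the quadrangle inequality c(a,c) + c(b,d) ≤ c(a,d) + c(b,c) for all a ≤ b ≤ c ≤ d, then in the DP recurrence dp[k][j] = min_i (dp[k-1][i] + c(i+1,j)), the largest optimal split point opt_k(j) is non-decreasing in j: opt_k(j+1) ≥ opt_k(j). -/
open Finset

/-- Knuth–Yao monotonicity of optimal split points: if the interval cost
`c` satisfies the quadrangle inequality, and `istar` (resp. `istar'`) is the largest
minimizer of `g i + c (i+1) j` over admissible `i ∈ [L, j)` (resp. over `i ∈ [L, j+1)`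
with right endpoint `j+1`), then `istar ≤ istar'`. -/
theorem opt_split_monotone (c : ℕ → ℕ → ℝ) (g : ℕ → ℝ) (L j : ℕ)
    (hQI : ∀ a b cc d : ℕ, a ≤ b → b ≤ cc → cc ≤ d →
      c a cc + c b d ≤ c a d + c b cc)
    (istar istar' : ℕ)
    (h1 : istar ∈ Ico L j)
    (h1min : ∀ i ∈ Ico L j, g istar + c (istar + 1) j ≤ g i + c (i + 1) j)
    (h1max : ∀ i ∈ Ico L j, g i + c (i + 1) j ≤ g istar + c (istar + 1) j → i ≤ istar)
    (h2 : istar' ∈ Ico L (j + 1))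
    (h2min : ∀ i ∈ Ico L (j + 1),
      g istar' + c (istar' + 1) (j + 1) ≤ g i + c (i + 1) (j + 1))
    (h2max : ∀ i ∈ Ico L (j + 1),
      g i + c (i + 1) (j + 1) ≤ g istar' + c (istar' + 1) (j + 1) → i ≤ istar') :
    istar ≤ istar' := by
  by_contra hlt
  push_neg at hlt
  simp only [mem_Ico] at h1 h2
  have hi'j : istar' < j := lt_trans hlt h1.2
  have hqi := hQI (istar' + 1) (istar + 1) j (j + 1)
    (by omega) (by omega) (by omega)
  have hb := h1min istar' (mem_Ico.mpr ⟨h2.1, hi'j⟩)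
  have := h2max istar (mem_Ico.mpr ⟨h1.1, by omega⟩) (by linarith)
  omega
end

section
/- Conformal coverage: let Z_1,...,Z_{m+1} be exchangeable real-valued random variables and let α : ℝ^{m+1} × {1,...,m+1} → ℝ be a symmetric score, i.e., α(z, j) depends on z only through the multiset of coordinates and the value z_j. Define the p-value p = (1/(m+1))·#{j : α(Z,j) ≥ α(Z,m+1)}. Then P(p ≤ ε) ≤ ε for every ε ∈ [0,1]. -/
open MeasureTheory Finset

open scoped ENNReal

/-!
Let `E j` be the event that the p-value computed at coordinate `j` is at most `ε`. Exchangeability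
of `Z` together with the symmetry of `α` makes all `E j` equally likely. Deterministically, at most
`ε (m + 1)` of them occur at once: in the set `S` of coordinates whose count is at most `t`, the one
of smallest score has all of `S` at or above it, so `#S ≤ t`. Summing the probabilities gives
`(m + 1) P(E (m + 1)) ≤ ε (m + 1)`.
-/

section UpperCount

variable {ι β : Type*} [Fintype ι] [LinearOrder β]

def upperCount (v : ι → β) (j : ι) : ℕ := #{i | v j ≤ v i}

lemma exists_mem_card_le_upperCount (v : ι → β) {S : Finset ι} (hS : S.Nonempty) :
    ∃ j ∈ S, #S ≤ upperCount v j := by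
  obtain ⟨j, hjS, hmin⟩ := S.exists_min_image v hS
  exact ⟨j, hjS, card_le_card fun i hi => mem_filter.mpr ⟨mem_univ i, hmin i hi⟩⟩

lemma card_upperCount_le_le (v : ι → β) {t : ℝ} (ht : 0 ≤ t) :
    (#{j | (upperCount v j : ℝ) ≤ t} : ℝ) ≤ t := by
  rcases eq_empty_or_nonempty {j | (upperCount v j : ℝ) ≤ t} with hS | hS
  · simpa [hS] using ht
  · obtain ⟨j, hjS, hcard⟩ := exists_mem_card_le_upperCount v hS
    exact (Nat.cast_le.mpr hcard).trans (mem_filter.mp hjS).2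

lemma upperCount_comp_perm (v : ι → β) (σ : Equiv.Perm ι) (j : ι) :
    upperCount (v ∘ σ) j = upperCount v (σ j) :=
  card_equiv σ fun i => by simp

lemma measurable_upperCount {Ω : Type*} [MeasurableSpace Ω] [TopologicalSpace β]
    [MeasurableSpace β] [OpensMeasurableSpace β] [OrderClosedTopology β]
    [SecondCountableTopology β] {f : Ω → ι → β} (hf : ∀ i, Measurable fun ω => f ω i) (j : ι) :
    Measurable fun ω => upperCount (f ω) j := by
  simp only [upperCount, card_filter]
  exact Finset.measurable_sum _ fun i _ =>
    Measurable.ite (measurableSet_le (hf j) (hf i)) measurable_const measurable_const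

lemma measurableSet_upperCount_div_le {Ω : Type*} [MeasurableSpace Ω] {f : Ω → ι → ℝ}
    (hf : ∀ i, Measurable fun ω => f ω i) (j : ι) (c ε : ℝ) :
    MeasurableSet {ω | (upperCount (f ω) j : ℝ) / c ≤ ε} :=
  measurableSet_le ((measurable_from_nat.comp (measurable_upperCount hf j)).div_const c)
    measurable_const

end UpperCount

open scoped Classical in
lemma sum_measure_le_of_card_mem_le {Ω ι : Type*} [MeasurableSpace Ω] [Fintype ι]
    (μ : Measure Ω) {s : ι → Set Ω} (hs : ∀ j, MeasurableSet (s j)) {C : ℝ≥0∞}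
    (hC : ∀ ω, (#{j | ω ∈ s j} : ℝ≥0∞) ≤ C) :
    ∑ j, μ (s j) ≤ C * μ Set.univ :=
  calc ∑ j, μ (s j) = ∫⁻ ω, ∑ j, (s j).indicator 1 ω ∂μ := by
        rw [lintegral_finsetSum _ fun j _ => measurable_one.indicator (hs j)]
        simp only [lintegral_indicator_one (hs _)]
    _ = ∫⁻ ω, (#{j | ω ∈ s j} : ℝ≥0∞) ∂μ := by
        simp only [card_filter, Set.indicator_apply, Pi.one_apply, Nat.cast_sum, Nat.cast_ite,
          Nat.cast_one, Nat.cast_zero]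
    _ ≤ ∫⁻ _, C ∂μ := lintegral_mono hC
    _ = C * μ Set.univ := lintegral_const C

lemma measure_upperCount_div_card_le {ι : Type*} [Fintype ι] [DecidableEq ι]
    (ν : Measure (ι → ℝ)) [IsProbabilityMeasure ν]
    (hν : ∀ σ : Equiv.Perm ι, ν.map (· ∘ σ) = ν)
    (α : (ι → ℝ) → ι → ℝ) (hαmeas : ∀ j, Measurable fun z => α z j)
    (hαsymm : ∀ (σ : Equiv.Perm ι) (z : ι → ℝ) (j : ι), α (z ∘ σ.symm) (σ j) = α z j)
    (j₀ : ι) {ε : ℝ} (hε : 0 ≤ ε) :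
    ν {z | (upperCount (α z) j₀ : ℝ) / Fintype.card ι ≤ ε} ≤ ENNReal.ofReal ε := by
  set B : ι → Set (ι → ℝ) := fun j => {z | (upperCount (α z) j : ℝ) / Fintype.card ι ≤ ε}
  have hB : ∀ j, MeasurableSet (B j) := fun j => measurableSet_upperCount_div_le hαmeas j _ ε
  have hα_comp : ∀ (σ : Equiv.Perm ι) z, α (z ∘ σ) = α z ∘ σ := fun σ z => funext fun i => by
    simpa using hαsymm σ.symm z (σ i)
  -- coordinate `j` of `z` is ranked like coordinate `j₀` of `z ∘ swap j₀ j`, an equally likely vector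
  have hB_eq : ∀ j, ν (B j) = ν (B j₀) := fun j => by
    have hσ : (· ∘ Equiv.swap j₀ j) ⁻¹' B j₀ = B j := by
      ext z
      simp [B, hα_comp, upperCount_comp_perm]
    rw [← hσ, ← Measure.map_apply (by fun_prop) (hB j₀), hν]
  have hpos : (0 : ℝ) < Fintype.card ι := Nat.cast_pos.mpr (Fintype.card_pos_iff.mpr ⟨j₀⟩)
  have hcard : ∀ z, (#{j | z ∈ B j} : ℝ≥0∞) ≤ ENNReal.ofReal (ε * Fintype.card ι) := fun z => by
    simp only [B, Set.mem_ofPred_eq, div_le_iff₀ hpos]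
    rw [← ENNReal.ofReal_natCast]
    exact ENNReal.ofReal_le_ofReal (card_upperCount_le_le (α z) (by positivity))
  have hsum := sum_measure_le_of_card_mem_le ν hB hcard
  rw [ENNReal.ofReal_mul hε, ENNReal.ofReal_natCast, measure_univ, mul_one, mul_comm] at hsum
  simp only [hB_eq, sum_const, card_univ, nsmul_eq_mul] at hsum
  exact (ENNReal.mul_le_mul_iff_right (by simpa using hpos.ne') (ENNReal.natCast_ne_top _)).mp hsum

/-- conformal coverage: let `Z = (Z_1, ..., Z_{m+1})` be exchangeable
real-valued random variables and `α` a symmetric (permutation-equivariant) score.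
With the conformal p-value `p = (1/(m+1)) #{j : α(Z, j) ≥ α(Z, m+1)}`, one has
`P(p ≤ ε) ≤ ε` for every `ε ∈ [0, 1]`. -/
theorem conformal_coverage {Ω : Type*} [MeasurableSpace Ω] (μ : Measure Ω)
    [IsProbabilityMeasure μ] (m : ℕ)
    (Z : Ω → Fin (m + 1) → ℝ) (hZ : Measurable Z)
    (hexch : ∀ σ : Equiv.Perm (Fin (m + 1)),
      Measure.map (fun ω => Z ω ∘ σ) μ = Measure.map Z μ)
    (α : (Fin (m + 1) → ℝ) → Fin (m + 1) → ℝ)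
    (hαmeas : ∀ j, Measurable fun z => α z j)
    (hαsymm : ∀ (σ : Equiv.Perm (Fin (m + 1))) (z : Fin (m + 1) → ℝ) (j : Fin (m + 1)),
      α (z ∘ σ.symm) (σ j) = α z j)
    (ε : ℝ) (hε : ε ∈ Set.Icc (0 : ℝ) 1) :
    μ {ω | ((univ.filter
        (fun j : Fin (m + 1) => α (Z ω) (Fin.last m) ≤ α (Z ω) j)).card : ℝ) / (m + 1) ≤ ε}
      ≤ ENNReal.ofReal ε := by
  have hν : ∀ σ : Equiv.Perm (Fin (m + 1)), (μ.map Z).map (· ∘ σ) = μ.map Z := fun σ => by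
    rw [Measure.map_map (by fun_prop) hZ]
    exact hexch σ
  have := Measure.isProbabilityMeasure_map (μ := μ) hZ.aemeasurable
  have key := measure_upperCount_div_card_le (μ.map Z) hν α hαmeas hαsymm (Fin.last m) hε.1
  rw [Measure.map_apply hZ (measurableSet_upperCount_div_le hαmeas _ _ ε)] at key
  simpa [upperCount] using key
end

section
/- Connection between conformal scores and DP cost: for reals y_1,...,y_m and any y_h, letting α_j(y_h) denote the CRPS of the empirical CDF of the augmented set {y_1,...,y_m,y_h} with the j-th element removed, evaluated at that j-th element (for j = 1,...,m+1, where the (m+1)-th element is y_h), the sum Σ_{j=1}^{m+1} α_j(y_h) equals ((m+1)/m²)·W', where W' is the sum of pairwise absolute differences over the augmented set. -/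
/-!
Write `D j = ∑ i, |z i - z j|` and `S = ∑ j, D j`. Removing `z j` leaves `m` atoms, whose
pairwise double sum is `S - 2 D j`, so `α_j = D j / m - (S - 2 D j) / (2 m²)`. Summing over `j`
gives `S / m - (m - 1) S / (2 m²) = (m + 1) S / (2 m²)`, and `S = 2 W'` by symmetry.
-/

open Finset

theorem Finset.sum_sum_eq_two_nsmul_sum_sum_filter_lt {ι M : Type*} [Fintype ι] [LinearOrder ι]
    [AddCommMonoid M] (f : ι → ι → M) (hsymm : ∀ i j, f i j = f j i) (hdiag : ∀ i, f i i = 0) :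
    ∑ i, ∑ j, f i j = 2 • ∑ i, ∑ j ∈ univ.filter (fun j => i < j), f i j := by
  have hsplit : ∀ i j, f i j = (if i < j then f i j else 0) + (if j < i then f i j else 0) := by
    intro i j
    rcases lt_trichotomy i j with h | rfl | h
    · simp [h, h.not_gt]
    · simp [hdiag]
    · simp [h, h.not_gt]
  have hswap : ∑ i, ∑ j, (if j < i then f i j else 0) = ∑ i, ∑ j, (if i < j then f i j else 0) := by
    rw [Finset.sum_comm]
    simp_rw [hsymm]
  simp_rw [Finset.sum_filter, two_nsmul]
  conv_lhs => enter [2, i, 2, j]; rw [hsplit i j]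
  simp_rw [Finset.sum_add_distrib, hswap]

section
variable {ι : Type*} [Fintype ι] [DecidableEq ι] (z : ι → ℝ)

theorem sum_erase_sum_erase_abs_sub (j : ι) :
    ∑ i ∈ univ.erase j, ∑ k ∈ univ.erase j, |z i - z k|
      = ∑ i, ∑ k, |z i - z k| - 2 * ∑ i, |z i - z j| := by
  have hcol : ∑ k, |z j - z k| = ∑ i, |z i - z j| := sum_congr rfl fun k _ => abs_sub_comm _ _
  have hrow : ∀ i, ∑ k ∈ univ.erase j, |z i - z k| = ∑ k, |z i - z k| - |z i - z j| :=
    fun i => sum_erase_eq_sub (mem_univ j)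
  rw [sum_congr rfl fun i _ => hrow i, sum_sub_distrib, sum_erase_eq_sub (mem_univ j),
    sum_erase _ (by simp), hcol]
  ring

theorem empCRPS_erase_self {m : ℕ} (hcard : Fintype.card ι = m + 1) (j : ι) :
    empCRPS (univ.erase j) z (z j)
      = 1 / m * ∑ i, |z i - z j|
        - 1 / (2 * (m : ℝ) ^ 2) * (∑ i, ∑ k, |z i - z k| - 2 * ∑ i, |z i - z j|) := by
  have hcard' : ((univ.erase j).card : ℝ) = m := by
    rw [card_erase_of_mem (mem_univ j), card_univ, hcard]; simp
  rw [empCRPS, hcard', sum_erase_sum_erase_abs_sub, sum_erase _ (by simp)]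

theorem sum_empCRPS_erase_self {m : ℕ} (hcard : Fintype.card ι = m + 1) :
    ∑ j, empCRPS (univ.erase j) z (z j)
      = ((m : ℝ) + 1) / (2 * (m : ℝ) ^ 2) * ∑ i, ∑ k, |z i - z k| := by
  simp_rw [empCRPS_erase_self z hcard, sum_sub_distrib, ← mul_sum, sum_sub_distrib, ← mul_sum,
    sum_const, card_univ, hcard, sum_comm (f := fun i j => |z i - z j|)]
  rcases eq_or_ne m 0 with rfl | hm
  · simp -- both sides vanish, as `1 / 0 = 0`
  · field_simp
    ring
end

theorem conformal_scores_sum_to_cost_general (m : ℕ) (z : Fin (m + 1) → ℝ) (W' : ℝ)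
    (hW' : W' = ∑ i, ∑ j ∈ univ.filter (fun j => i < j), |z i - z j|) :
    ∑ j, empCRPS (univ.erase j) z (z j)
      = ((m : ℝ) + 1) / (m : ℝ) ^ 2 * W' := by
  rw [sum_empCRPS_erase_self z (Fintype.card_fin _),
    sum_sum_eq_two_nsmul_sum_sum_filter_lt _ (fun _ _ => abs_sub_comm _ _) (by simp), ← hW']
  ring

/-- conformal scores sum to the DP cost: let `z` be the augmented sample
`(y 1, ..., y m, y_h)` and `α_j(y_h)` the CRPS of the empirical CDF of `z` with the
`j`-th element removed, evaluated at the `j`-th element. Then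
`Σ_{j=1}^{m+1} α_j(y_h) = ((m+1)/m²)·W'`, where `W'` is the sum of pairwise absolute
differences over the augmented set. -/
theorem conformal_scores_sum_to_cost (m : ℕ) (hm : 1 ≤ m) (y : Fin m → ℝ) (yh : ℝ)
    (z : Fin (m + 1) → ℝ) (hz : z = Fin.snoc y yh) (W' : ℝ)
    (hW' : W' = ∑ i, ∑ j ∈ univ.filter (fun j => i < j), |z i - z j|) :
    ∑ j, empCRPS (univ.erase j) z (z j)
      = ((m : ℝ) + 1) / (m : ℝ) ^ 2 * W' :=
  conformal_scores_sum_to_cost_general m z W' hW'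
end
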